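/- Let a, b, z be points in hyperbolic 4-space H⁴ realized as the upper half-space model, with d(z, [a,b]) ≤ R where [a,b] is the geodesic segment from a to b. Let L_a and L_b be the vertical geodesic rays from a and b, respectively, to the ideal point ∞. Then min{ d(z, L_a), d(z, L_b) } ≤ 2 + R. -/

import Mathlib

/-- Euclidean distance on `ℝ⁴` (coordinates indexed by `Fin 4`). -/
noncomputable def eDist (x y : Fin 4 → ℝ) : ℝ :=
  Real.sqrt (∑ i, (x i - y i) ^ 2)

/-- Hyperbolic distance in the upper half-space model
`H⁴ = {x : Fin 4 → ℝ | 0 < x 3}`, via the standard identity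
`2·sinh(d(x,y)/2) = |x − y| / √(x₄·y₄)`. -/
noncomputable def hDist (x y : Fin 4 → ℝ) : ℝ :=
  2 * Real.arsinh (eDist x y / (2 * Real.sqrt (x 3 * y 3)))

/-- The vertical geodesic ray from a point `p` of the upper half-space to the
ideal point `∞`: the set of points directly above `p`. -/
def vertRay (p : Fin 4 → ℝ) : Set (Fin 4 → ℝ) :=
  {w | w 0 = p 0 ∧ w 1 = p 1 ∧ w 2 = p 2 ∧ p 3 ≤ w 3}

/-- Hyperbolic distance from a point to a set, `d(z,S) = inf {d(z,s) : s ∈ S}`. -/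
noncomputable def hDistSet (z : Fin 4 → ℝ) (S : Set (Fin 4 → ℝ)) : ℝ :=
  sInf ((hDist z) '' S)

/-!
In the upper half-space `sinh (d(x,y)/2) = |x - y| / (2√(x₄y₄))` and
`cosh (d(x,y)/2) = |x - ȳ| / (2√(x₄y₄))`, where `ȳ` is the mirror image of `y` in the
boundary. Invert in the unit sphere about `w̄` and write `'` for images: then `sinh (d(a,b)/2)`
and `sinh ((d(a,w) + d(w,b))/2)` are the same positive multiple of `|a'b'|` and
`|a'w'| + |w'b'|`. So the hyperbolic triangle inequality is the Euclidean one, and if `w` lies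
on the geodesic `[a,b]` then `w'` lies on the segment `[a',b']`. The hemisphere of Euclidean
radius `w₄` centred below `w` passes through `w̄`, so it is sent to the horizontal hyperplane
through `w'`, and one of `a`, `b` lies under it. Such a point `e` has `e₄ ≤ w₄`, and the point
of `L_e` at height `w₄` is within distance `1` of `w`.
-/

open Real EuclideanGeometry

namespace UpperHalfSpace

noncomputable def mirror (y : Fin 4 → ℝ) : Fin 4 → ℝ :=
  Function.update y 3 (-y 3)

noncomputable def invAt (w x : Fin 4 → ℝ) : EuclideanSpace ℝ (Fin 4) :=
  inversion (WithLp.toLp 2 (mirror w)) 1 (WithLp.toLp 2 x)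

lemma eDist_eq_dist (x y : Fin 4 → ℝ) :
    eDist x y = dist (WithLp.toLp 2 x) (WithLp.toLp 2 y) := by
  simp only [eDist, EuclideanSpace.dist_eq, Real.dist_eq, sq_abs]

lemma eDist_nonneg (x y : Fin 4 → ℝ) : 0 ≤ eDist x y := sqrt_nonneg _

lemma eDist_sq (x y : Fin 4 → ℝ) : eDist x y ^ 2 = ∑ i, (x i - y i) ^ 2 :=
  sq_sqrt (Finset.sum_nonneg fun _ _ => sq_nonneg _)

lemma eDist_mirror_sq (x y : Fin 4 → ℝ) :
    eDist x (mirror y) ^ 2 = eDist x y ^ 2 + 4 * (x 3 * y 3) := by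
  simp only [eDist_sq, mirror, Fin.sum_univ_four, ne_eq, Fin.reduceEq, not_false_eq_true,
    Function.update_of_ne, Function.update_self, sub_neg_eq_add]
  ring

lemma eDist_mirror_comm (x y : Fin 4 → ℝ) : eDist x (mirror y) = eDist y (mirror x) := by
  simp only [eDist, mirror, Fin.sum_univ_four, ne_eq, Fin.reduceEq, not_false_eq_true,
    Function.update_of_ne, Function.update_self, sub_neg_eq_add]
  ring_nf

lemma eDist_mirror_self {y : Fin 4 → ℝ} (hy : 0 ≤ y 3) : eDist y (mirror y) = 2 * y 3 := by
  have h : eDist y (mirror y) ^ 2 = (2 * y 3) ^ 2 := by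
    rw [eDist_mirror_sq, eDist_sq]
    simp only [sub_self, ne_eq, OfNat.ofNat_ne_zero, not_false_eq_true, zero_pow,
      Finset.sum_const_zero, zero_add]
    ring
  exact (sq_eq_sq₀ (eDist_nonneg _ _) (by positivity)).mp h

lemma eDist_mirror_pos {x y : Fin 4 → ℝ} (hx : 0 < x 3) (hy : 0 < y 3) :
    0 < eDist x (mirror y) := by
  have h := eDist_mirror_sq x y
  nlinarith [eDist_nonneg x (mirror y), mul_pos hx hy]

lemma hDist_nonneg (x y : Fin 4 → ℝ) : 0 ≤ hDist x y :=
  mul_nonneg zero_le_two (arsinh_nonneg_iff.mpr (div_nonneg (eDist_nonneg _ _) (by positivity)))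

lemma sinh_half_hDist (x y : Fin 4 → ℝ) :
    sinh (hDist x y / 2) = eDist x y / (2 * √(x 3 * y 3)) := by
  rw [hDist, mul_div_cancel_left₀ _ two_ne_zero, sinh_arsinh]

lemma cosh_half_hDist {x y : Fin 4 → ℝ} (hx : 0 < x 3) (hy : 0 < y 3) :
    cosh (hDist x y / 2) = eDist x (mirror y) / (2 * √(x 3 * y 3)) := by
  have hsq : cosh (hDist x y / 2) ^ 2 = (eDist x (mirror y) / (2 * √(x 3 * y 3))) ^ 2 := by
    rw [cosh_sq', sinh_half_hDist, div_pow, div_pow, eDist_mirror_sq, mul_pow,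
      sq_sqrt (by positivity)]
    field_simp
    ring
  exact (sq_eq_sq₀ (cosh_pos _).le (div_nonneg (eDist_nonneg _ _) (by positivity))).mp hsq

lemma hDist_le_eDist_div_sqrt (x y : Fin 4 → ℝ) : hDist x y ≤ eDist x y / √(x 3 * y 3) := by
  have ht : 0 ≤ eDist x y / (2 * √(x 3 * y 3)) := div_nonneg (eDist_nonneg _ _) (by positivity)
  have := (arsinh_le_arsinh.mpr (self_le_sinh_iff.mpr ht)).trans_eq (arsinh_sinh _)
  calc hDist x y ≤ 2 * (eDist x y / (2 * √(x 3 * y 3))) := by rw [hDist]; gcongr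
    _ = eDist x y / √(x 3 * y 3) := by ring

lemma dist_invAt {w x y : Fin 4 → ℝ} (hw : 0 < w 3) (hx : 0 < x 3) (hy : 0 < y 3) :
    dist (invAt w x) (invAt w y) = eDist x y / (eDist x (mirror w) * eDist y (mirror w)) := by
  have hne : ∀ {p : Fin 4 → ℝ}, 0 < p 3 → WithLp.toLp 2 p ≠ WithLp.toLp 2 (mirror w) :=
    fun hp => dist_pos.mp ((eDist_eq_dist _ _).symm ▸ eDist_mirror_pos hp hw)
  rw [invAt, invAt, dist_inversion_inversion (hne hx) (hne hy), ← eDist_eq_dist,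
    ← eDist_eq_dist, ← eDist_eq_dist, one_pow, one_div_mul_eq_div]

lemma exists_sinh_half_hDist_eq_mul_dist_invAt {a w b : Fin 4 → ℝ}
    (ha : 0 < a 3) (hw : 0 < w 3) (hb : 0 < b 3) :
    ∃ k > 0, sinh (hDist a b / 2) = k * dist (invAt w a) (invAt w b) ∧
      sinh ((hDist a w + hDist w b) / 2) =
        k * (dist (invAt w a) (invAt w w) + dist (invAt w w) (invAt w b)) := by
  have hA := eDist_mirror_pos ha hw
  have hB := eDist_mirror_pos hb hw
  have hroot : √(a 3 * w 3) * √(w 3 * b 3) = w 3 * √(a 3 * b 3) := by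
    rw [← sqrt_mul (by positivity), show a 3 * w 3 * (w 3 * b 3) = w 3 ^ 2 * (a 3 * b 3) by ring,
      sqrt_mul (sq_nonneg _), sqrt_sq hw.le]
  refine ⟨eDist a (mirror w) * eDist b (mirror w) / (2 * √(a 3 * b 3)), by positivity, ?_, ?_⟩
  · rw [sinh_half_hDist, dist_invAt hw ha hb]
    field_simp
  · rw [add_div, sinh_add, sinh_half_hDist, sinh_half_hDist, cosh_half_hDist ha hw,
      cosh_half_hDist hw hb, eDist_mirror_comm w b, dist_invAt hw ha hw, dist_invAt hw hw hb,
      eDist_mirror_self hw.le]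
    field_simp
    rw [hroot]
    ring

theorem hDist_triangle {x y z : Fin 4 → ℝ} (hx : 0 < x 3) (hy : 0 < y 3) (hz : 0 < z 3) :
    hDist x z ≤ hDist x y + hDist y z := by
  obtain ⟨k, hk, hxz, hxyz⟩ := exists_sinh_half_hDist_eq_mul_dist_invAt hx hy hz
  have hsinh : sinh (hDist x z / 2) ≤ sinh ((hDist x y + hDist y z) / 2) := by
    rw [hxz, hxyz]
    gcongr
    exact dist_triangle _ _ _
  linarith [sinh_le_sinh.mp hsinh]

theorem wbtw_invAt_of_hDist_add_eq {a w b : Fin 4 → ℝ} (ha : 0 < a 3) (hw : 0 < w 3)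
    (hb : 0 < b 3) (h : hDist a w + hDist w b = hDist a b) :
    Wbtw ℝ (invAt w a) (invAt w w) (invAt w b) := by
  obtain ⟨k, hk, hab, hawb⟩ := exists_sinh_half_hDist_eq_mul_dist_invAt ha hw hb
  rw [h, hab] at hawb
  exact dist_add_dist_eq_iff.mp (mul_left_cancel₀ hk.ne' hawb).symm

lemma invAt_apply_three (w x : Fin 4 → ℝ) :
    invAt w x 3 = (x 3 + w 3) / eDist x (mirror w) ^ 2 - w 3 := by
  simp only [invAt, inversion, mirror, ← eDist_eq_dist, one_div, inv_pow, vsub_eq_sub,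
    vadd_eq_add, PiLp.add_apply, PiLp.smul_apply, PiLp.sub_apply, Function.update_self,
    sub_neg_eq_add, smul_eq_mul]
  ring

lemma sum_sq_le_sq_of_invAt_three_le {w x : Fin 4 → ℝ} (hw : 0 < w 3) (hx : 0 < x 3)
    (h : invAt w w 3 ≤ invAt w x 3) :
    (x 0 - w 0) ^ 2 + (x 1 - w 1) ^ 2 + (x 2 - w 2) ^ 2 + x 3 ^ 2 ≤ w 3 ^ 2 := by
  have hD := eDist_mirror_pos hx hw
  rw [invAt_apply_three, invAt_apply_three, eDist_mirror_self hw.le, sub_le_sub_iff_right,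
    show (w 3 + w 3) / (2 * w 3) ^ 2 = 1 / (2 * w 3) by field_simp; ring,
    div_le_div_iff₀ (by positivity) (by positivity), eDist_sq] at h
  simp only [mirror, Fin.sum_univ_four, ne_eq, Fin.reduceEq, not_false_eq_true,
    Function.update_of_ne, Function.update_self, sub_neg_eq_add, one_mul] at h
  nlinarith

lemma hDistSet_le {z p : Fin 4 → ℝ} {S : Set (Fin 4 → ℝ)} (hp : p ∈ S) :
    hDistSet z S ≤ hDist z p :=
  csInf_le ⟨0, by rintro _ ⟨q, -, rfl⟩; exact hDist_nonneg z q⟩ ⟨p, hp, rfl⟩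

lemma hDistSet_vertRay_le {x w z : Fin 4 → ℝ} (hw : 0 < w 3) (hz : 0 < z 3)
    (h : (x 0 - w 0) ^ 2 + (x 1 - w 1) ^ 2 + (x 2 - w 2) ^ 2 + x 3 ^ 2 ≤ w 3 ^ 2) :
    hDistSet z (vertRay x) ≤ hDist z w + 1 := by
  set p := Function.update x 3 (w 3)
  have hp : p ∈ vertRay x := by
    refine ⟨by simp [p], by simp [p], by simp [p], ?_⟩
    simp only [p, Function.update_self]
    nlinarith
  have hwp : hDist w p ≤ 1 := by
    refine (hDist_le_eDist_div_sqrt w p).trans ?_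
    have hE : eDist w p ^ 2 ≤ w 3 ^ 2 := by
      simp only [eDist_sq, p, Fin.sum_univ_four, ne_eq, Fin.reduceEq, not_false_eq_true,
        Function.update_of_ne, Function.update_self, sub_self, OfNat.ofNat_ne_zero, zero_pow,
        add_zero]
      nlinarith
    rw [show p 3 = w 3 from Function.update_self .., sqrt_mul_self hw.le, div_le_one hw]
    exact abs_le_of_sq_le_sq' hE hw.le |>.2
  calc hDistSet z (vertRay x) ≤ hDist z p := hDistSet_le hp
    _ ≤ hDist z w + hDist w p := hDist_triangle hz hw (by simpa [p] using hw)
    _ ≤ hDist z w + 1 := by linarith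

theorem min_hDistSet_vertRay_le {a b w z : Fin 4 → ℝ} (ha : 0 < a 3) (hb : 0 < b 3)
    (hw : 0 < w 3) (hz : 0 < z 3) (h : hDist a w + hDist w b = hDist a b) :
    min (hDistSet z (vertRay a)) (hDistSet z (vertRay b)) ≤ hDist z w + 1 := by
  have hmax : invAt w w 3 ≤ max (invAt w a 3) (invAt w b 3) :=
    ((EuclideanSpace.proj 3 : EuclideanSpace ℝ (Fin 4) →L[ℝ] ℝ).toLinearMap.convexOn
      convex_univ).le_max_of_mem_segment trivial trivial
      (wbtw_invAt_of_hDist_add_eq ha hw hb h).mem_segment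
  rcases le_max_iff.mp hmax with ha' | hb'
  · exact min_le_of_left_le <|
      hDistSet_vertRay_le hw hz (sum_sq_le_sq_of_invAt_three_le hw ha ha')
  · exact min_le_of_right_le <|
      hDistSet_vertRay_le hw hz (sum_sq_le_sq_of_invAt_three_le hw hb hb')

end UpperHalfSpace

theorem near_vertical_ray_general (a b z : Fin 4 → ℝ)
    (ha : 0 < a 3) (hb : 0 < b 3) (hz : 0 < z 3)
    (γ : ℝ → (Fin 4 → ℝ)) (T : ℝ)
    (hγpos : ∀ s ∈ Set.Icc 0 T, 0 < γ s 3)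
    (hγiso : ∀ s ∈ Set.Icc 0 T, ∀ t ∈ Set.Icc 0 T, hDist (γ s) (γ t) = |s - t|)
    (hγa : γ 0 = a) (hγb : γ T = b)
    (R : ℝ)
    (hclose : ∃ s ∈ Set.Icc 0 T, hDist z (γ s) ≤ R) :
    min (hDistSet z (vertRay a)) (hDistSet z (vertRay b)) ≤ 2 + R := by
  obtain ⟨s, hs, hzs⟩ := hclose
  have h0 : (0 : ℝ) ∈ Set.Icc 0 T := ⟨le_rfl, hs.1.trans hs.2⟩
  have hT : T ∈ Set.Icc 0 T := ⟨hs.1.trans hs.2, le_rfl⟩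
  have hsplit : hDist a (γ s) + hDist (γ s) b = hDist a b := by
    rw [← hγa, ← hγb, hγiso 0 h0 s hs, hγiso s hs T hT, hγiso 0 h0 T hT,
      abs_of_nonpos (by linarith [hs.1]), abs_of_nonpos (by linarith [hs.2]),
      abs_of_nonpos (by linarith [h0.2])]
    ring
  linarith [UpperHalfSpace.min_hDistSet_vertRay_le ha hb (hγpos s hs) hz hsplit]

/-- Proposition 4 of the paper.  Let `a, b, z` be points of hyperbolic 4-space
(upper half-space model) with `d(z, [a,b]) ≤ R`, where `[a,b]` is the geodesic
segment from `a` to `b` (parametrized by arclength by `γ : [0,T] → H⁴`).  If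
`L_a`, `L_b` are the vertical geodesic rays from `a` and `b` to the ideal point
`∞`, then `min{d(z,L_a), d(z,L_b)} ≤ 2 + R`. -/
theorem near_vertical_ray (a b z : Fin 4 → ℝ)
    (ha : 0 < a 3) (hb : 0 < b 3) (hz : 0 < z 3)
    (γ : ℝ → (Fin 4 → ℝ)) (T : ℝ) (hT : 0 ≤ T)
    (hγpos : ∀ s ∈ Set.Icc 0 T, 0 < γ s 3)
    (hγiso : ∀ s ∈ Set.Icc 0 T, ∀ t ∈ Set.Icc 0 T, hDist (γ s) (γ t) = |s - t|)
    (hγa : γ 0 = a) (hγb : γ T = b)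
    (R : ℝ) (hR : 0 ≤ R)
    (hclose : ∃ s ∈ Set.Icc 0 T, hDist z (γ s) ≤ R) :
    min (hDistSet z (vertRay a)) (hDistSet z (vertRay b)) ≤ 2 + R :=
  near_vertical_ray_general a b z ha hb hz γ T hγpos hγiso hγa hγb R hclose
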